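/- arXiv:1712.06884 — 5 statements merged into one kernel-verified Lean document; each statement's English description precedes it below -/
import Mathlib

section
/- If a bipartite probability distribution p(a,b|x,y) admits a local hidden variable decomposition p(a,b|x,y) = ∫ ρ(λ) p₁(a|x,λ) p₂(b|y,λ) dλ, then the CHSH expression S = |E(0,0) + E(0,1) + E(1,0) − E(1,1)| satisfies S ≤ 2, where E(x,y) = Σ_{a,b∈{±1}} a·b·p(a,b|x,y). -/
open MeasureTheory

noncomputable section

/-- Numerical value `±1` of a Boolean outcome. -/
def sgn (a : Bool) : ℝ := if a then 1 else -1

/-- Correlator `E(x,y) = ∑_{a,b} a·b·p(a,b|x,y)`. -/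
def corrE (p : Bool → Bool → Fin 2 → Fin 2 → ℝ) (x y : Fin 2) : ℝ :=
  ∑ a : Bool, ∑ b : Bool, sgn a * sgn b * p a b x y

/-!
Writing `A_x(λ) = ∑ₐ a p₁(a|x,λ)` and `B_y(λ) = ∑_b b p₂(b|y,λ)` for the local mean outcomes,
the decomposition factorises each correlator as `E(x,y) = ∫ A_x B_y dρ`. Since `|A_x|, |B_y| ≤ 1`,
the integrand `A₀(B₀ + B₁) + A₁(B₀ - B₁)` of the CHSH combination is bounded by
`|B₀ + B₁| + |B₀ - B₁| = 2 max(|B₀|, |B₁|) ≤ 2` pointwise, and integrating against a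
probability measure preserves this bound.
-/

lemma abs_sgn (a : Bool) : |sgn a| = 1 := by
  cases a <;> simp [sgn]

def meanSgn (q : Bool → ℝ) : ℝ := ∑ a, sgn a * q a

lemma abs_le_one_of_sum_eq_one {ι : Type*} [Fintype ι] {q : ι → ℝ} (hq : ∀ i, 0 ≤ q i)
    (hsum : ∑ i, q i = 1) (i : ι) : |q i| ≤ 1 := by
  rw [abs_of_nonneg (hq i), ← hsum]
  exact Finset.single_le_sum (fun j _ => hq j) (Finset.mem_univ i)

lemma abs_sum_mul_le_one {ι : Type*} [Fintype ι] {f q : ι → ℝ} (hf : ∀ i, |f i| ≤ 1)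
    (hq : ∀ i, 0 ≤ q i) (hsum : ∑ i, q i = 1) : |∑ i, f i * q i| ≤ 1 :=
  calc |∑ i, f i * q i| ≤ ∑ i, |f i * q i| := Finset.abs_sum_le_sum_abs _ _
    _ ≤ ∑ i, q i := Finset.sum_le_sum fun i _ => by
        rw [abs_mul, abs_of_nonneg (hq i)]
        exact mul_le_of_le_one_left (hq i) (hf i)
    _ = 1 := hsum

lemma abs_meanSgn_le_one {q : Bool → ℝ} (hq : ∀ a, 0 ≤ q a) (hsum : ∑ a, q a = 1) :
    |meanSgn q| ≤ 1 :=
  abs_sum_mul_le_one (fun a => (abs_sgn a).le) hq hsum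

lemma abs_add_add_abs_sub_le_two {c d : ℝ} (hc : |c| ≤ 1) (hd : |d| ≤ 1) :
    |c + d| + |c - d| ≤ 2 := by
  rw [abs_le] at hc hd
  rcases abs_cases (c + d) with ⟨h₁, -⟩ | ⟨h₁, -⟩ <;>
    rcases abs_cases (c - d) with ⟨h₂, -⟩ | ⟨h₂, -⟩ <;> linarith

lemma abs_chsh_le_two {a b c d : ℝ} (ha : |a| ≤ 1) (hb : |b| ≤ 1) (hc : |c| ≤ 1)
    (hd : |d| ≤ 1) : |a * c + a * d + b * c - b * d| ≤ 2 :=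
  calc |a * c + a * d + b * c - b * d| = |a * (c + d) + b * (c - d)| := by ring_nf
    _ ≤ |a| * |c + d| + |b| * |c - d| := by
        rw [← abs_mul, ← abs_mul]; exact abs_add_le _ _
    _ ≤ |c + d| + |c - d| := by
        gcongr <;> exact mul_le_of_le_one_left (abs_nonneg _) ‹_›
    _ ≤ 2 := abs_add_add_abs_sub_le_two hc hd

section Integral

variable {Λ : Type*} [MeasurableSpace Λ] {μ : Measure Λ}

lemma integrable_mul_of_abs_le_one [IsFiniteMeasure μ] {f g : Λ → ℝ}
    (hf : Measurable f) (hg : Measurable g) (hf₁ : ∀ l, |f l| ≤ 1) (hg₁ : ∀ l, |g l| ≤ 1) :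
    Integrable (fun l => f l * g l) μ :=
  .of_bound (hf.mul hg).aestronglyMeasurable 1 <| .of_forall fun l => by
    rw [Real.norm_eq_abs, abs_mul]
    exact mul_le_one₀ (hf₁ l) (abs_nonneg _) (hg₁ l)

lemma corrE_eq_integral_meanSgn_mul (p₁ p₂ : Bool → Fin 2 → Λ → ℝ)
    (p : Bool → Bool → Fin 2 → Fin 2 → ℝ)
    (hp : ∀ a b x y, p a b x y = ∫ l, p₁ a x l * p₂ b y l ∂μ) (x y : Fin 2)
    (hint : ∀ a b, Integrable (fun l => p₁ a x l * p₂ b y l) μ) :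
    corrE p x y = ∫ l, meanSgn (p₁ · x l) * meanSgn (p₂ · y l) ∂μ := by
  have hint' : ∀ a b, Integrable (fun l => sgn a * sgn b * (p₁ a x l * p₂ b y l)) μ :=
    fun a b => (hint a b).const_mul _
  calc corrE p x y = ∑ a, ∑ b, ∫ l, sgn a * sgn b * (p₁ a x l * p₂ b y l) ∂μ := by
        simp only [corrE, hp, integral_const_mul]
    _ = ∫ l, ∑ a, ∑ b, sgn a * sgn b * (p₁ a x l * p₂ b y l) ∂μ := by
        rw [integral_finsetSum _ fun a _ => integrable_finsetSum _ fun b _ => hint' a b]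
        simp only [integral_finsetSum _ fun b _ => hint' _ b]
    _ = ∫ l, meanSgn (p₁ · x l) * meanSgn (p₂ · y l) ∂μ := by
        simp only [meanSgn, Finset.sum_mul_sum, mul_mul_mul_comm]

lemma abs_integral_chsh_le_two [IsProbabilityMeasure μ] (A B : Fin 2 → Λ → ℝ)
    (hint : ∀ x y, Integrable (fun l => A x l * B y l) μ)
    (hA : ∀ x l, |A x l| ≤ 1) (hB : ∀ y l, |B y l| ≤ 1) :
    |(∫ l, A 0 l * B 0 l ∂μ) + (∫ l, A 0 l * B 1 l ∂μ) + (∫ l, A 1 l * B 0 l ∂μ)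
      - ∫ l, A 1 l * B 1 l ∂μ| ≤ 2 := by
  have h₂ : Integrable (fun l => A 0 l * B 0 l + A 0 l * B 1 l) μ := (hint 0 0).add (hint 0 1)
  have h₃ : Integrable (fun l => A 0 l * B 0 l + A 0 l * B 1 l + A 1 l * B 0 l) μ :=
    h₂.add (hint 1 0)
  rw [← integral_add (hint 0 0) (hint 0 1), ← integral_add h₂ (hint 1 0),
    ← integral_sub h₃ (hint 1 1)]
  have hbound : ∀ᵐ l ∂μ, ‖A 0 l * B 0 l + A 0 l * B 1 l + A 1 l * B 0 l - A 1 l * B 1 l‖ ≤ 2 :=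
    .of_forall fun l => abs_chsh_le_two (hA 0 l) (hA 1 l) (hB 0 l) (hB 1 l)
  simpa using norm_integral_le_of_norm_le_const hbound

end Integral

/-- If a bipartite distribution admits a local hidden variable decomposition,
then the CHSH expression satisfies `S ≤ 2`. -/
theorem chsh_of_local_hidden_variables
    {Λ : Type*} [MeasurableSpace Λ] (μ : Measure Λ) [IsProbabilityMeasure μ]
    (p₁ p₂ : Bool → Fin 2 → Λ → ℝ)
    (h₁meas : ∀ a x, Measurable (p₁ a x)) (h₂meas : ∀ b y, Measurable (p₂ b y))
    (h₁nonneg : ∀ a x l, 0 ≤ p₁ a x l) (h₂nonneg : ∀ b y l, 0 ≤ p₂ b y l)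
    (h₁sum : ∀ x l, ∑ a : Bool, p₁ a x l = 1) (h₂sum : ∀ y l, ∑ b : Bool, p₂ b y l = 1)
    (p : Bool → Bool → Fin 2 → Fin 2 → ℝ)
    (hp : ∀ a b x y, p a b x y = ∫ l, p₁ a x l * p₂ b y l ∂μ) :
    |corrE p 0 0 + corrE p 0 1 + corrE p 1 0 - corrE p 1 1| ≤ 2 := by
  set A : Fin 2 → Λ → ℝ := fun x l => meanSgn (p₁ · x l)
  set B : Fin 2 → Λ → ℝ := fun y l => meanSgn (p₂ · y l)
  have hA : ∀ x l, |A x l| ≤ 1 := fun x l => abs_meanSgn_le_one (h₁nonneg · x l) (h₁sum x l)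
  have hB : ∀ y l, |B y l| ≤ 1 := fun y l => abs_meanSgn_le_one (h₂nonneg · y l) (h₂sum y l)
  have hAmeas : ∀ x, Measurable (A x) := fun x =>
    Finset.measurable_sum _ fun a _ => (h₁meas a x).const_mul _
  have hBmeas : ∀ y, Measurable (B y) := fun y =>
    Finset.measurable_sum _ fun b _ => (h₂meas b y).const_mul _
  have hcorr : ∀ x y, corrE p x y = ∫ l, A x l * B y l ∂μ := fun x y =>
    corrE_eq_integral_meanSgn_mul p₁ p₂ p hp x y fun a b =>
      integrable_mul_of_abs_le_one (h₁meas a x) (h₂meas b y)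
        (fun l => abs_le_one_of_sum_eq_one (h₁nonneg · x l) (h₁sum x l) a)
        (fun l => abs_le_one_of_sum_eq_one (h₂nonneg · y l) (h₂sum y l) b)
  simp only [hcorr]
  exact abs_integral_chsh_le_two A B
    (fun x y => integrable_mul_of_abs_le_one (hAmeas x) (hBmeas y) (hA x) (hB y)) hA hB
end
end

section
/- For a two-qubit state ρ with correlation matrix T whose two largest singular values are t₁ ≥ t₂, the maximum over measurement settings of the quantum CHSH value equals 2√(t₁² + t₂²) (Horodecki criterion); hence ρ violates CHSH iff t₁² + t₂² > 1. -/
open Matrix Complex Kronecker ComplexOrder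

noncomputable section

/-- Pauli matrices `σ₁, σ₂, σ₃`. -/
def pauli : Fin 3 → Matrix (Fin 2) (Fin 2) ℂ :=
  ![!![0, 1; 1, 0], !![0, -Complex.I; Complex.I, 0], !![1, 0; 0, -1]]

/-- Correlation matrix `T_{ij} = Tr(ρ σ_i ⊗ σ_j)` of a two-qubit state. -/
def corrMat (ρ : Matrix (Fin 2 × Fin 2) (Fin 2 × Fin 2) ℂ) : Matrix (Fin 3) (Fin 3) ℝ :=
  Matrix.of fun i j => ((ρ * (pauli i ⊗ₖ pauli j)).trace).re

/-- The set of CHSH values `|⟨a, T b⟩ + ⟨a, T b′⟩ + ⟨a′, T b⟩ − ⟨a′, T b′⟩|` attainable with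
unit measurement vectors `a, a′, b, b′ ∈ ℝ³`. -/
def chshValues (T : Matrix (Fin 3) (Fin 3) ℝ) : Set ℝ :=
  {s | ∃ a a' b b' : Fin 3 → ℝ,
        (∑ i, a i ^ 2 = 1) ∧ (∑ i, a' i ^ 2 = 1) ∧ (∑ i, b i ^ 2 = 1) ∧ (∑ i, b' i ^ 2 = 1) ∧
        s = |a ⬝ᵥ T.mulVec b + a ⬝ᵥ T.mulVec b' + a' ⬝ᵥ T.mulVec b - a' ⬝ᵥ T.mulVec b'|}

/-!
After the substitution `a ↦ R₁ᵀ a`, `b ↦ R₂ b` the correlation matrix becomes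
`D = diag(t₁, t₂, t₃)`. The CHSH value is `a ⬝ D(b + b') + a' ⬝ D(b - b')`, hence by
Cauchy–Schwarz at most `‖D p‖ + ‖D q‖` with `p = b + b'`, `q = b - b'`. These are orthogonal with
`‖p‖² + ‖q‖² = 4`, and for orthogonal `p, q` Ky Fan's inequality in homogeneous form,
`‖D p‖² ‖q‖² + ‖D q‖² ‖p‖² ≤ (t₁² + t₂²) ‖p‖² ‖q‖²`, bounds `‖D p‖ + ‖D q‖` by `2√(t₁² + t₂²)`.
The bound is attained by the first two axes for `a, a'` and `b, b' = (cos θ, ± sin θ, 0)`, where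
`(t₁, t₂) = r (cos θ, sin θ)`.
-/

section

variable {n : Type*} [Fintype n]

lemma abs_dotProduct_le_sqrt_sum_sq {a : n → ℝ} (ha : ∑ i, a i ^ 2 = 1) (x : n → ℝ) :
    |a ⬝ᵥ x| ≤ √(∑ i, x i ^ 2) := by
  rw [← Real.sqrt_sq_eq_abs]
  gcongr
  simpa [ha, dotProduct] using Finset.sum_mul_sq_le_sq_mul_sq Finset.univ a x

lemma abs_chsh_le_sqrt_add_sqrt (T : Matrix n n ℝ) {a a' : n → ℝ}
    (ha : ∑ i, a i ^ 2 = 1) (ha' : ∑ i, a' i ^ 2 = 1) (b b' : n → ℝ) :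
    |a ⬝ᵥ T *ᵥ b + a ⬝ᵥ T *ᵥ b' + a' ⬝ᵥ T *ᵥ b - a' ⬝ᵥ T *ᵥ b'|
      ≤ √(∑ i, (T *ᵥ (b + b')) i ^ 2) + √(∑ i, (T *ᵥ (b - b')) i ^ 2) := by
  have hsplit : a ⬝ᵥ T *ᵥ b + a ⬝ᵥ T *ᵥ b' + a' ⬝ᵥ T *ᵥ b - a' ⬝ᵥ T *ᵥ b'
      = a ⬝ᵥ T *ᵥ (b + b') + a' ⬝ᵥ T *ᵥ (b - b') := by
    simp only [mulVec_add, mulVec_sub, dotProduct_add, dotProduct_sub]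
    ring
  rw [hsplit]
  exact (abs_add_le _ _).trans
    (add_le_add (abs_dotProduct_le_sqrt_sum_sq ha _) (abs_dotProduct_le_sqrt_sum_sq ha' _))

variable [DecidableEq n]

lemma sum_sq_mulVec_of_transpose_mul_self {R : Matrix n n ℝ} (hR : Rᵀ * R = 1) (x : n → ℝ) :
    ∑ i, (R *ᵥ x) i ^ 2 = ∑ i, x i ^ 2 := by
  have hsq (y : n → ℝ) : ∑ i, y i ^ 2 = y ⬝ᵥ y := by simp [dotProduct, sq]
  rw [hsq, hsq, dotProduct_mulVec, ← mulVec_transpose, mulVec_mulVec, hR, one_mulVec]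

lemma sum_sq_vecMul_of_mul_transpose_self {R : Matrix n n ℝ} (hR : R * Rᵀ = 1) (x : n → ℝ) :
    ∑ i, (x ᵥ* R) i ^ 2 = ∑ i, x i ^ 2 := by
  rw [← mulVec_transpose]
  exact sum_sq_mulVec_of_transpose_mul_self (by rwa [transpose_transpose]) x

end

lemma chshValues_mul_mul_subset {R S : Matrix (Fin 3) (Fin 3) ℝ}
    (hR : R ∈ orthogonalGroup (Fin 3) ℝ) (hS : S ∈ orthogonalGroup (Fin 3) ℝ)
    (T : Matrix (Fin 3) (Fin 3) ℝ) : chshValues (R * T * S) ⊆ chshValues T := by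
  rintro _ ⟨a, a', b, b', ha, ha', hb, hb', rfl⟩
  have hR' := (mem_orthogonalGroup_iff (Fin 3) ℝ).1 hR
  have hS' := (mem_orthogonalGroup_iff' (Fin 3) ℝ).1 hS
  refine ⟨a ᵥ* R, a' ᵥ* R, S *ᵥ b, S *ᵥ b', ?_, ?_, ?_, ?_, ?_⟩
  · rwa [sum_sq_vecMul_of_mul_transpose_self hR']
  · rwa [sum_sq_vecMul_of_mul_transpose_self hR']
  · rwa [sum_sq_mulVec_of_transpose_mul_self hS']
  · rwa [sum_sq_mulVec_of_transpose_mul_self hS']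
  · simp only [← mulVec_mulVec, dotProduct_mulVec]

lemma chshValues_orthogonal_mul_mul {R S : Matrix (Fin 3) (Fin 3) ℝ}
    (hR : R ∈ orthogonalGroup (Fin 3) ℝ) (hS : S ∈ orthogonalGroup (Fin 3) ℝ)
    (T : Matrix (Fin 3) (Fin 3) ℝ) : chshValues (R * T * S) = chshValues T := by
  have hR' := (mem_orthogonalGroup_iff' (Fin 3) ℝ).1 hR
  have hS' := (mem_orthogonalGroup_iff (Fin 3) ℝ).1 hS
  have hRt : Rᵀ ∈ orthogonalGroup (Fin 3) ℝ := by
    rwa [mem_orthogonalGroup_iff, transpose_transpose]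
  have hSt : Sᵀ ∈ orthogonalGroup (Fin 3) ℝ := by
    rwa [mem_orthogonalGroup_iff', transpose_transpose]
  have hT : Rᵀ * (R * T * S) * Sᵀ = T := by
    rw [← mul_assoc, ← mul_assoc, hR', one_mul, mul_assoc, hS', mul_one]
  refine (chshValues_mul_mul_subset hR hS T).antisymm ?_
  simpa only [hT] using chshValues_mul_mul_subset hRt hSt (R * T * S)

lemma add_le_two_mul_sqrt_of_weighted {x y P Q K : ℝ} (hx : 0 ≤ x) (hy : 0 ≤ y)
    (hP : 0 ≤ P) (hQ : 0 ≤ Q) (hPQ : P + Q = 4) (hxP : x ^ 2 ≤ K * P) (hyQ : y ^ 2 ≤ K * Q)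
    (hxy : x ^ 2 * Q + y ^ 2 * P ≤ K * (P * Q)) : x + y ≤ 2 * √K := by
  have hK : 0 ≤ K := by nlinarith
  suffices (x + y) ^ 2 ≤ 4 * K by nlinarith [Real.sq_sqrt hK, Real.sqrt_nonneg K]
  rcases hP.eq_or_lt with rfl | hP
  · obtain rfl : x = 0 := by nlinarith
    nlinarith
  rcases hQ.eq_or_lt with rfl | hQ
  · obtain rfl : y = 0 := by nlinarith
    nlinarith
  have hCS : (x + y) ^ 2 * (P * Q) ≤ (x ^ 2 * Q + y ^ 2 * P) * (P + Q) := by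
    nlinarith [sq_nonneg (x * Q - y * P)]
  rw [hPQ] at hCS
  exact le_of_mul_le_mul_right (by linarith) (mul_pos hP hQ)

section Diagonal

variable {t₁ t₂ t₃ : ℝ}

lemma sum_sq_diagonal_mulVec_le (h23 : t₃ ≤ t₂) (h3 : 0 ≤ t₃) (p : Fin 3 → ℝ) :
    ∑ i, (diagonal ![t₁, t₂, t₃] *ᵥ p) i ^ 2 ≤ (t₁ ^ 2 + t₂ ^ 2) * ∑ i, p i ^ 2 := by
  simp only [mulVec_diagonal, Fin.sum_univ_three, cons_val_zero, cons_val_one, Matrix.cons_val]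
  nlinarith [mul_le_mul_of_nonneg_right (sq_le_sq' (by linarith) h23) (sq_nonneg (p 2)),
    sq_nonneg (t₁ * p 1), sq_nonneg (t₁ * p 2), sq_nonneg (t₂ * p 0)]

lemma sum_sq_diagonal_mulVec_add_le_of_orthogonal (h12 : t₂ ≤ t₁) (h23 : t₃ ≤ t₂) (h3 : 0 ≤ t₃)
    {p q : Fin 3 → ℝ} (hpq : p ⬝ᵥ q = 0) :
    (∑ i, (diagonal ![t₁, t₂, t₃] *ᵥ p) i ^ 2) * ∑ i, q i ^ 2
      + (∑ i, (diagonal ![t₁, t₂, t₃] *ᵥ q) i ^ 2) * ∑ i, p i ^ 2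
      ≤ (t₁ ^ 2 + t₂ ^ 2) * ((∑ i, p i ^ 2) * ∑ i, q i ^ 2) := by
  simp only [mulVec_diagonal, Fin.sum_univ_three, dotProduct, cons_val_zero, cons_val_one,
    Matrix.cons_val] at hpq ⊢
  have h12' : t₂ ^ 2 ≤ t₁ ^ 2 := by nlinarith
  have h23' : t₃ ^ 2 ≤ t₂ ^ 2 := by nlinarith
  have hsq : (p 0 * q 0) ^ 2 = (p 1 * q 1 + p 2 * q 2) ^ 2 := by
    rw [show p 0 * q 0 = -(p 1 * q 1 + p 2 * q 2) by linarith]; ring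
  nlinarith [mul_nonneg (sub_nonneg.2 h12') (sq_nonneg (p 1 * q 2 - p 2 * q 1)),
    mul_nonneg (sub_nonneg.2 h23') (sq_nonneg (p 1 * q 2)),
    mul_nonneg (sub_nonneg.2 h23') (sq_nonneg (p 2 * q 1)),
    mul_nonneg (sub_nonneg.2 h23') (sq_nonneg (p 0 * q 2)),
    mul_nonneg (sub_nonneg.2 h23') (sq_nonneg (p 2 * q 0)),
    mul_nonneg (sub_nonneg.2 h23') (sq_nonneg (p 2 * q 2))]

lemma sqrt_add_sqrt_diagonal_mulVec_le (h12 : t₂ ≤ t₁) (h23 : t₃ ≤ t₂) (h3 : 0 ≤ t₃)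
    {p q : Fin 3 → ℝ} (hpq : p ⬝ᵥ q = 0) (hnorm : ∑ i, p i ^ 2 + ∑ i, q i ^ 2 = 4) :
    √(∑ i, (diagonal ![t₁, t₂, t₃] *ᵥ p) i ^ 2) + √(∑ i, (diagonal ![t₁, t₂, t₃] *ᵥ q) i ^ 2)
      ≤ 2 * √(t₁ ^ 2 + t₂ ^ 2) := by
  apply add_le_two_mul_sqrt_of_weighted (Real.sqrt_nonneg _) (Real.sqrt_nonneg _)
    (by positivity) (by positivity) hnorm <;>
    simp only [Real.sq_sqrt (Finset.sum_nonneg fun _ _ => sq_nonneg _)]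
  · exact sum_sq_diagonal_mulVec_le h23 h3 p
  · exact sum_sq_diagonal_mulVec_le h23 h3 q
  · exact sum_sq_diagonal_mulVec_add_le_of_orthogonal h12 h23 h3 hpq

lemma two_mul_sqrt_mem_upperBounds_chshValues_diagonal (h12 : t₂ ≤ t₁) (h23 : t₃ ≤ t₂)
    (h3 : 0 ≤ t₃) : 2 * √(t₁ ^ 2 + t₂ ^ 2) ∈ upperBounds (chshValues (diagonal ![t₁, t₂, t₃])) := by
  rintro _ ⟨a, a', b, b', ha, ha', hb, hb', rfl⟩
  refine (abs_chsh_le_sqrt_add_sqrt _ ha ha' b b').trans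
    (sqrt_add_sqrt_diagonal_mulVec_le h12 h23 h3 ?_ ?_)
  · simp only [dotProduct, Pi.add_apply, Pi.sub_apply, Fin.sum_univ_three] at hb hb' ⊢
    linear_combination hb - hb'
  · simp only [Pi.add_apply, Pi.sub_apply, Fin.sum_univ_three] at hb hb' ⊢
    linear_combination 2 * hb + 2 * hb'

lemma two_mul_sqrt_mem_chshValues_diagonal :
    2 * √(t₁ ^ 2 + t₂ ^ 2) ∈ chshValues (diagonal ![t₁, t₂, t₃]) := by
  set z : ℂ := ⟨t₁, t₂⟩
  have hc : ‖z‖ * Real.cos z.arg = t₁ := Complex.norm_mul_cos_arg z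
  have hs : ‖z‖ * Real.sin z.arg = t₂ := Complex.norm_mul_sin_arg z
  have hcs := Real.cos_sq_add_sin_sq z.arg
  rw [← Complex.norm_eq_sqrt_sq_add_sq z]
  refine ⟨![1, 0, 0], ![0, 1, 0], ![Real.cos z.arg, Real.sin z.arg, 0],
    ![Real.cos z.arg, -Real.sin z.arg, 0], ?_, ?_, ?_, ?_, ?_⟩
  iterate 4 simp [Fin.sum_univ_three]
  have hvalue : t₁ * Real.cos z.arg + t₁ * Real.cos z.arg + t₂ * Real.sin z.arg
      + t₂ * Real.sin z.arg = 2 * ‖z‖ := by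
    linear_combination (-2 * Real.cos z.arg) * hc + (-2 * Real.sin z.arg) * hs + 2 * ‖z‖ * hcs
  simp only [dotProduct, mulVec_diagonal, Fin.sum_univ_three, Fin.isValue, cons_val_zero, one_mul,
    cons_val_one, zero_mul, add_zero, Matrix.cons_val, mul_zero, mul_neg, neg_zero, zero_add,
    sub_neg_eq_add]
  rw [hvalue, abs_of_nonneg (by positivity)]

lemma isGreatest_chshValues_diagonal (h12 : t₂ ≤ t₁) (h23 : t₃ ≤ t₂) (h3 : 0 ≤ t₃) :
    IsGreatest (chshValues (diagonal ![t₁, t₂, t₃])) (2 * √(t₁ ^ 2 + t₂ ^ 2)) :=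
  ⟨two_mul_sqrt_mem_chshValues_diagonal,
    two_mul_sqrt_mem_upperBounds_chshValues_diagonal h12 h23 h3⟩

end Diagonal

theorem horodecki_criterion_general
    (ρ : Matrix (Fin 2 × Fin 2) (Fin 2 × Fin 2) ℂ)
    (t₁ t₂ t₃ : ℝ) (h12 : t₁ ≥ t₂) (h23 : t₂ ≥ t₃) (h3 : 0 ≤ t₃)
    (R₁ R₂ : Matrix (Fin 3) (Fin 3) ℝ)
    (hR₁ : R₁ ∈ Matrix.orthogonalGroup (Fin 3) ℝ) (hR₂ : R₂ ∈ Matrix.orthogonalGroup (Fin 3) ℝ)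
    (hSVD : corrMat ρ = R₁ * Matrix.diagonal ![t₁, t₂, t₃] * R₂) :
    IsGreatest (chshValues (corrMat ρ)) (2 * Real.sqrt (t₁ ^ 2 + t₂ ^ 2)) ∧
    ((∃ s ∈ chshValues (corrMat ρ), s > 2) ↔ t₁ ^ 2 + t₂ ^ 2 > 1) := by
  have hmax : IsGreatest (chshValues (corrMat ρ)) (2 * √(t₁ ^ 2 + t₂ ^ 2)) := by
    rw [hSVD, chshValues_orthogonal_mul_mul hR₁ hR₂]
    exact isGreatest_chshValues_diagonal h12 h23 h3
  refine ⟨hmax, (lt_isLUB_iff hmax.isLUB).symm.trans ?_⟩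
  rw [gt_iff_lt, lt_mul_iff_one_lt_right two_pos, Real.lt_sqrt zero_le_one, one_pow]

/-- Horodecki criterion: the maximal quantum CHSH value of a two-qubit state with
correlation-matrix singular values `t₁ ≥ t₂ ≥ t₃ ≥ 0` is `2√(t₁² + t₂²)`, and the state
violates CHSH iff `t₁² + t₂² > 1`. -/
theorem horodecki_criterion
    (ρ : Matrix (Fin 2 × Fin 2) (Fin 2 × Fin 2) ℂ)
    (hρ : ρ.PosSemidef) (hρtr : ρ.trace = 1)
    (t₁ t₂ t₃ : ℝ) (h12 : t₁ ≥ t₂) (h23 : t₂ ≥ t₃) (h3 : 0 ≤ t₃)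
    (R₁ R₂ : Matrix (Fin 3) (Fin 3) ℝ)
    (hR₁ : R₁ ∈ Matrix.orthogonalGroup (Fin 3) ℝ) (hR₂ : R₂ ∈ Matrix.orthogonalGroup (Fin 3) ℝ)
    (hSVD : corrMat ρ = R₁ * Matrix.diagonal ![t₁, t₂, t₃] * R₂) :
    IsGreatest (chshValues (corrMat ρ)) (2 * Real.sqrt (t₁ ^ 2 + t₂ ^ 2)) ∧
    ((∃ s ∈ chshValues (corrMat ρ), s > 2) ↔ t₁ ^ 2 + t₂ ^ 2 > 1) :=
  horodecki_criterion_general ρ t₁ t₂ t₃ h12 h23 h3 R₁ R₂ hR₁ hR₂ hSVD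
end
end

section
/- If a tripartite probability distribution satisfies p(a,b,c|x,y,z) = p(c|a,b,x,y,z)·p(a,b|x,y) and p(a,b|x,y) = ζ p^{A≺B}(a,b|x,y) + (1−ζ) p^{B≺A}(a,b|x,y) with p^{A≺B} one-way signaling from A to B only (its marginal on a does not depend on y) and p^{B≺A} one-way signaling from B to A only, then p(a,b,c|x,y,z) is a convex mixture of a distribution compatible with the order A≺B≺C and one compatible with B≺A≺C. -/
noncomputable section

variable {A B C X Y Z : Type*} [Fintype A] [Fintype B] [Fintype C]

/-- `q` is a (conditional) probability distribution over outcomes `(a,b,c)`. -/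
def IsTriDist (q : A → B → C → X → Y → Z → ℝ) : Prop :=
  (∀ a b c x y z, 0 ≤ q a b c x y z) ∧
  (∀ x y z, ∑ a, ∑ b, ∑ c, q a b c x y z = 1)

/-- `q` is compatible with the causal order `A ≺ B ≺ C`: the marginal on `a` does not
depend on `y, z`, and the marginal on `(a,b)` does not depend on `z`. -/
def CompatABC (q : A → B → C → X → Y → Z → ℝ) : Prop :=
  (∀ a x y y' z z', ∑ b, ∑ c, q a b c x y z = ∑ b, ∑ c, q a b c x y' z') ∧
  (∀ a b x y z z', ∑ c, q a b c x y z = ∑ c, q a b c x y z')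

/-- `q` is compatible with the causal order `B ≺ A ≺ C`: the marginal on `b` does not
depend on `x, z`, and the marginal on `(a,b)` does not depend on `z`. -/
def CompatBAC (q : A → B → C → X → Y → Z → ℝ) : Prop :=
  (∀ b x x' y z z', ∑ a, ∑ c, q a b c x y z = ∑ a, ∑ c, q a b c x' y z') ∧
  (∀ a b x y z z', ∑ c, q a b c x y z = ∑ c, q a b c x y z')

/-! Completing each ordered component of `p(a,b|x,y)` by the common response `p(c|a,b,x,y,z)`
gives the required decomposition: summing out `c` recovers the component itself, so its
one-way signaling becomes the compatibility of the completed distribution with the matching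
causal order, and `z`, seen only by `C`, never reaches the marginal on `(a,b)`. -/

def extendByConditional (pc : C → A → B → X → Y → Z → ℝ) (r : A → B → X → Y → ℝ) :
    A → B → C → X → Y → Z → ℝ :=
  fun a b c x y z => pc c a b x y z * r a b x y

section ExtendByConditional

variable {A B C X Y Z : Type*} [Fintype C] {pc : C → A → B → X → Y → Z → ℝ}
  {r : A → B → X → Y → ℝ}

theorem sum_extendByConditional (hpc_sum : ∀ a b x y z, ∑ c, pc c a b x y z = 1)
    (a : A) (b : B) (x : X) (y : Y) (z : Z) :
    ∑ c, extendByConditional pc r a b c x y z = r a b x y := by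
  simp only [extendByConditional, ← Finset.sum_mul, hpc_sum, one_mul]

theorem isTriDist_extendByConditional [Fintype A] [Fintype B]
    (hpc_nonneg : ∀ c a b x y z, 0 ≤ pc c a b x y z)
    (hpc_sum : ∀ a b x y z, ∑ c, pc c a b x y z = 1) (hr_nonneg : ∀ a b x y, 0 ≤ r a b x y)
    (hr_sum : ∀ x y, ∑ a, ∑ b, r a b x y = 1) :
    IsTriDist (extendByConditional pc r) :=
  ⟨fun a b c x y z => mul_nonneg (hpc_nonneg c a b x y z) (hr_nonneg a b x y),
    fun x y z => by simp only [sum_extendByConditional hpc_sum, hr_sum]⟩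

theorem compatABC_extendByConditional [Fintype B]
    (hpc_sum : ∀ a b x y z, ∑ c, pc c a b x y z = 1)
    (hr_oneway : ∀ a x y y', ∑ b, r a b x y = ∑ b, r a b x y') :
    CompatABC (extendByConditional pc r) := by
  constructor
  · intro a x y y' z z'
    simp only [sum_extendByConditional hpc_sum, hr_oneway a x y y']
  · intro a b x y z z'
    simp only [sum_extendByConditional hpc_sum]

theorem compatBAC_extendByConditional [Fintype A]
    (hpc_sum : ∀ a b x y z, ∑ c, pc c a b x y z = 1)
    (hr_oneway : ∀ b x x' y, ∑ a, r a b x y = ∑ a, r a b x' y) :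
    CompatBAC (extendByConditional pc r) := by
  constructor
  · intro b x x' y z z'
    simp only [sum_extendByConditional hpc_sum, hr_oneway b x x' y]
  · intro a b x y z z'
    simp only [sum_extendByConditional hpc_sum]

end ExtendByConditional

theorem switch_satisfies_causal_inequalities_general
    (p : A → B → C → X → Y → Z → ℝ)
    (pc : C → A → B → X → Y → Z → ℝ)
    (pab pAB pBA : A → B → X → Y → ℝ) (ζ : ℝ)
    (hpc_nonneg : ∀ c a b x y z, 0 ≤ pc c a b x y z)
    (hpc_sum : ∀ a b x y z, ∑ c, pc c a b x y z = 1)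
    (hp : ∀ a b c x y z, p a b c x y z = pc c a b x y z * pab a b x y)
    (hmix : ∀ a b x y, pab a b x y = ζ * pAB a b x y + (1 - ζ) * pBA a b x y)
    (hAB_nonneg : ∀ a b x y, 0 ≤ pAB a b x y) (hBA_nonneg : ∀ a b x y, 0 ≤ pBA a b x y)
    (hAB_sum : ∀ x y, ∑ a, ∑ b, pAB a b x y = 1) (hBA_sum : ∀ x y, ∑ a, ∑ b, pBA a b x y = 1)
    -- `pAB` is one-way signaling from A to B only: its marginal on `a` does not depend on `y`
    (hAB_oneway : ∀ a x y y', ∑ b, pAB a b x y = ∑ b, pAB a b x y')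
    -- `pBA` is one-way signaling from B to A only: its marginal on `b` does not depend on `x`
    (hBA_oneway : ∀ b x x' y, ∑ a, pBA a b x y = ∑ a, pBA a b x' y) :
    ∃ q₁ q₂ : A → B → C → X → Y → Z → ℝ,
      IsTriDist q₁ ∧ IsTriDist q₂ ∧ CompatABC q₁ ∧ CompatBAC q₂ ∧
      ∀ a b c x y z, p a b c x y z = ζ * q₁ a b c x y z + (1 - ζ) * q₂ a b c x y z := by
  refine ⟨extendByConditional pc pAB, extendByConditional pc pBA,
    isTriDist_extendByConditional hpc_nonneg hpc_sum hAB_nonneg hAB_sum,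
    isTriDist_extendByConditional hpc_nonneg hpc_sum hBA_nonneg hBA_sum,
    compatABC_extendByConditional hpc_sum hAB_oneway,
    compatBAC_extendByConditional hpc_sum hBA_oneway, fun a b c x y z => ?_⟩
  rw [hp, hmix, extendByConditional, extendByConditional]
  ring

/-- The quantum SWITCH satisfies causal inequalities: if `p(a,b,c|x,y,z) =
p(c|a,b,x,y,z)·p(a,b|x,y)` with `p(a,b|x,y)` a convex mixture of one-way signaling
distributions, then `p` is a convex mixture of a distribution compatible with `A≺B≺C`
and one compatible with `B≺A≺C`. -/
theorem switch_satisfies_causal_inequalities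
    (p : A → B → C → X → Y → Z → ℝ)
    (pc : C → A → B → X → Y → Z → ℝ)
    (pab pAB pBA : A → B → X → Y → ℝ) (ζ : ℝ)
    (hζ₀ : 0 ≤ ζ) (hζ₁ : ζ ≤ 1)
    (hpc_nonneg : ∀ c a b x y z, 0 ≤ pc c a b x y z)
    (hpc_sum : ∀ a b x y z, ∑ c, pc c a b x y z = 1)
    (hp : ∀ a b c x y z, p a b c x y z = pc c a b x y z * pab a b x y)
    (hmix : ∀ a b x y, pab a b x y = ζ * pAB a b x y + (1 - ζ) * pBA a b x y)
    (hAB_nonneg : ∀ a b x y, 0 ≤ pAB a b x y) (hBA_nonneg : ∀ a b x y, 0 ≤ pBA a b x y)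
    (hAB_sum : ∀ x y, ∑ a, ∑ b, pAB a b x y = 1) (hBA_sum : ∀ x y, ∑ a, ∑ b, pBA a b x y = 1)
    -- `pAB` is one-way signaling from A to B only: its marginal on `a` does not depend on `y`
    (hAB_oneway : ∀ a x y y', ∑ b, pAB a b x y = ∑ b, pAB a b x y')
    -- `pBA` is one-way signaling from B to A only: its marginal on `b` does not depend on `x`
    (hBA_oneway : ∀ b x x' y, ∑ a, pBA a b x y = ∑ a, pBA a b x' y) :
    ∃ q₁ q₂ : A → B → C → X → Y → Z → ℝ,
      IsTriDist q₁ ∧ IsTriDist q₂ ∧ CompatABC q₁ ∧ CompatBAC q₂ ∧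
      ∀ a b c x y z, p a b c x y z = ζ * q₁ a b c x y z + (1 - ζ) * q₂ a b c x y z :=
  switch_satisfies_causal_inequalities_general p pc pab pAB pBA ζ hpc_nonneg hpc_sum hp hmix
    hAB_nonneg hBA_nonneg hAB_sum hBA_sum hAB_oneway hBA_oneway
end
end

section
/- For any Hermitian ±1-observables A₀, A₁, B₀, B₁ (each squaring to the identity) on arbitrary Hilbert spaces, the operator S = A₀⊗B₀ + A₀⊗B₁ + A₁⊗B₀ − A₁⊗B₁ satisfies S² = 4·I + [A₀,A₁]⊗[B₁,B₀], and hence ‖S‖ ≤ 2√2 (Tsirelson's bound). -/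
open Matrix Kronecker
open scoped Matrix.Norms.L2Operator

/-!
Embed the observables as `aᵢ = Aᵢ ⊗ 1` and `bⱼ = 1 ⊗ Bⱼ`: self-adjoint involutions in the
C⋆-algebra of matrices on `n × m`, each `aᵢ` commuting with each `bⱼ`. For such elements of any
ring, expanding `S = a₀b₀ + a₀b₁ + a₁b₀ − a₁b₁` gives `S² = 4 + [a₀,a₁][b₁,b₀]`. In a C⋆-ring
the involutions have norm at most `1`, so each commutator has norm at most `2`, and `S` is
self-adjoint, hence `‖S‖² = ‖S²‖ ≤ 4 + 2 · 2 = 8`.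
-/

section Ring

variable {R : Type*} [Ring R] {a₀ a₁ b₀ b₁ : R}

def chsh (a₀ a₁ b₀ b₁ : R) : R := a₀ * b₀ + a₀ * b₁ + a₁ * b₀ - a₁ * b₁

theorem chsh_mul_self
    (ha₀ : a₀ * a₀ = 1) (ha₁ : a₁ * a₁ = 1) (hb₀ : b₀ * b₀ = 1) (hb₁ : b₁ * b₁ = 1)
    (h₀₀ : Commute a₀ b₀) (h₀₁ : Commute a₀ b₁) (h₁₀ : Commute a₁ b₀) (h₁₁ : Commute a₁ b₁) :
    chsh a₀ a₁ b₀ b₁ * chsh a₀ a₁ b₀ b₁ = 4 + (a₀ * a₁ - a₁ * a₀) * (b₁ * b₀ - b₀ * b₁) := by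
  have ha₀' (x : R) : a₀ * (a₀ * x) = x := by rw [← mul_assoc, ha₀, one_mul]
  have ha₁' (x : R) : a₁ * (a₁ * x) = x := by rw [← mul_assoc, ha₁, one_mul]
  rw [show (4 : R) = 1 + 1 + 1 + 1 by norm_num]
  -- Commuting every `b` past every `a` puts each of the 16 terms in the form `a * a' * b * b'`.
  simp only [chsh, add_mul, mul_add, sub_mul, mul_sub, mul_assoc, h₀₀.symm.left_comm,
    h₀₁.symm.left_comm, h₁₀.symm.left_comm, h₁₁.symm.left_comm, ha₀', ha₁', hb₀, hb₁]
  abel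

variable [StarRing R]

theorem IsSelfAdjoint.chsh
    (ha₀ : IsSelfAdjoint a₀) (ha₁ : IsSelfAdjoint a₁) (hb₀ : IsSelfAdjoint b₀)
    (hb₁ : IsSelfAdjoint b₁)
    (h₀₀ : Commute a₀ b₀) (h₀₁ : Commute a₀ b₁) (h₁₀ : Commute a₁ b₀) (h₁₁ : Commute a₁ b₁) :
    IsSelfAdjoint (chsh a₀ a₁ b₀ b₁) :=
  ((((ha₀.commute_iff hb₀).mp h₀₀).add ((ha₀.commute_iff hb₁).mp h₀₁)).add
    ((ha₁.commute_iff hb₀).mp h₁₀)).sub ((ha₁.commute_iff hb₁).mp h₁₁)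

end Ring

theorem norm_commutator_le {R : Type*} [NonUnitalSeminormedRing R] {a b : R}
    (ha : ‖a‖ ≤ 1) (hb : ‖b‖ ≤ 1) :
    ‖a * b - b * a‖ ≤ 2 :=
  calc ‖a * b - b * a‖ ≤ ‖a‖ * ‖b‖ + ‖b‖ * ‖a‖ :=
        (norm_sub_le _ _).trans (add_le_add (norm_mul_le _ _) (norm_mul_le _ _))
    _ ≤ 1 * 1 + 1 * 1 := by gcongr
    _ = 2 := by norm_num

section CStarRing

variable {E : Type*} [NormedRing E] [StarRing E] [CStarRing E]

theorem CStarRing.norm_one_le : ‖(1 : E)‖ ≤ 1 := by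
  nontriviality E
  exact CStarRing.norm_one.le

theorem IsSelfAdjoint.norm_le_one_of_mul_self_eq_one {a : E} (ha : IsSelfAdjoint a)
    (h : a * a = 1) : ‖a‖ ≤ 1 := by
  have : ‖a‖ ^ 2 ≤ 1 := by rw [← ha.norm_mul_self, h]; exact CStarRing.norm_one_le
  exact (pow_le_one_iff_of_nonneg (norm_nonneg a) two_ne_zero).mp this

theorem norm_chsh_le {a₀ a₁ b₀ b₁ : E}
    (ha₀ : IsSelfAdjoint a₀) (ha₁ : IsSelfAdjoint a₁) (hb₀ : IsSelfAdjoint b₀)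
    (hb₁ : IsSelfAdjoint b₁)
    (ha₀sq : a₀ * a₀ = 1) (ha₁sq : a₁ * a₁ = 1) (hb₀sq : b₀ * b₀ = 1) (hb₁sq : b₁ * b₁ = 1)
    (h₀₀ : Commute a₀ b₀) (h₀₁ : Commute a₀ b₁) (h₁₀ : Commute a₁ b₀) (h₁₁ : Commute a₁ b₁) :
    ‖chsh a₀ a₁ b₀ b₁‖ ≤ 2 * √2 := by
  have hcomm : ‖(a₀ * a₁ - a₁ * a₀) * (b₁ * b₀ - b₀ * b₁)‖ ≤ 4 := by
    have hA := norm_commutator_le (ha₀.norm_le_one_of_mul_self_eq_one ha₀sq)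
      (ha₁.norm_le_one_of_mul_self_eq_one ha₁sq)
    have hB := norm_commutator_le (hb₁.norm_le_one_of_mul_self_eq_one hb₁sq)
      (hb₀.norm_le_one_of_mul_self_eq_one hb₀sq)
    calc _ ≤ ‖a₀ * a₁ - a₁ * a₀‖ * ‖b₁ * b₀ - b₀ * b₁‖ := norm_mul_le _ _
      _ ≤ 2 * 2 := by gcongr
      _ = 4 := by norm_num
  have hfour : ‖(4 : E)‖ ≤ 4 := by
    simpa using (Nat.norm_cast_le (α := E) 4).trans
      (mul_le_of_le_one_right (by norm_num) CStarRing.norm_one_le)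
  have hsq : ‖chsh a₀ a₁ b₀ b₁‖ ^ 2 ≤ (2 * √2) ^ 2 := by
    rw [← (IsSelfAdjoint.chsh ha₀ ha₁ hb₀ hb₁ h₀₀ h₀₁ h₁₀ h₁₁).norm_mul_self,
      chsh_mul_self ha₀sq ha₁sq hb₀sq hb₁sq h₀₀ h₀₁ h₁₀ h₁₁, mul_pow, Real.sq_sqrt zero_le_two]
    linarith [norm_add_le (4 : E) ((a₀ * a₁ - a₁ * a₀) * (b₁ * b₀ - b₀ * b₁))]
  exact le_of_pow_le_pow_left₀ two_ne_zero (by positivity) hsq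

end CStarRing

namespace Matrix

variable {l n p q α : Type*}

theorem sub_kronecker [Ring α] (A B : Matrix l p α) (C : Matrix n q α) :
    (A - B) ⊗ₖ C = A ⊗ₖ C - B ⊗ₖ C := by
  ext; simp [sub_mul]

theorem kronecker_sub [Ring α] (A : Matrix l p α) (B C : Matrix n q α) :
    A ⊗ₖ (B - C) = A ⊗ₖ B - A ⊗ₖ C := by
  ext; simp [mul_sub]

variable [Fintype l] [DecidableEq l] [Fintype n] [DecidableEq n] [CommSemiring α]

theorem commute_kronecker_one_one_kronecker (A : Matrix l l α) (B : Matrix n n α) :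
    Commute (A ⊗ₖ (1 : Matrix n n α)) ((1 : Matrix l l α) ⊗ₖ B) := by
  simp only [Commute, SemiconjBy, ← mul_kronecker_mul, mul_one, one_mul]

theorem kronecker_mul_kronecker_self_eq_one {A : Matrix l l α} {B : Matrix n n α}
    (hA : A * A = 1) (hB : B * B = 1) : A ⊗ₖ B * A ⊗ₖ B = 1 := by
  rw [← mul_kronecker_mul, hA, hB, one_kronecker_one]

end Matrix

theorem IsSelfAdjoint.kronecker {l n α : Type*} [CommSemiring α] [StarRing α]
    {A : Matrix l l α} {B : Matrix n n α} (hA : IsSelfAdjoint A) (hB : IsSelfAdjoint B) :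
    IsSelfAdjoint (A ⊗ₖ B) := by
  rw [IsSelfAdjoint, Matrix.star_eq_conjTranspose, Matrix.conjTranspose_kronecker]
  exact congrArg₂ _ hA hB

/-- Tsirelson's bound: for Hermitian `±1`-observables `A₀, A₁` and `B₀, B₁` on (finite
dimensional) Hilbert spaces, the CHSH operator
`S = A₀⊗B₀ + A₀⊗B₁ + A₁⊗B₀ − A₁⊗B₁` satisfies `S² = 4·I + [A₀,A₁]⊗[B₁,B₀]`, and hence
`‖S‖ ≤ 2√2` in the operator norm. -/
theorem tsirelson_bound
    {n m : Type*} [Fintype n] [DecidableEq n] [Fintype m] [DecidableEq m]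
    (A₀ A₁ : Matrix n n ℂ) (B₀ B₁ : Matrix m m ℂ)
    (hA₀ : A₀ᴴ = A₀) (hA₁ : A₁ᴴ = A₁) (hB₀ : B₀ᴴ = B₀) (hB₁ : B₁ᴴ = B₁)
    (hA₀sq : A₀ * A₀ = 1) (hA₁sq : A₁ * A₁ = 1) (hB₀sq : B₀ * B₀ = 1) (hB₁sq : B₁ * B₁ = 1) :
    (A₀ ⊗ₖ B₀ + A₀ ⊗ₖ B₁ + A₁ ⊗ₖ B₀ - A₁ ⊗ₖ B₁) * (A₀ ⊗ₖ B₀ + A₀ ⊗ₖ B₁ + A₁ ⊗ₖ B₀ - A₁ ⊗ₖ B₁)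
      = (4 : ℂ) • (1 : Matrix (n × m) (n × m) ℂ)
          + (A₀ * A₁ - A₁ * A₀) ⊗ₖ (B₁ * B₀ - B₀ * B₁) ∧
    ‖A₀ ⊗ₖ B₀ + A₀ ⊗ₖ B₁ + A₁ ⊗ₖ B₀ - A₁ ⊗ₖ B₁‖ ≤ 2 * Real.sqrt 2 := by
  set a₀ := A₀ ⊗ₖ (1 : Matrix m m ℂ)
  set a₁ := A₁ ⊗ₖ (1 : Matrix m m ℂ)
  set b₀ := (1 : Matrix n n ℂ) ⊗ₖ B₀
  set b₁ := (1 : Matrix n n ℂ) ⊗ₖ B₁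
  have hS : A₀ ⊗ₖ B₀ + A₀ ⊗ₖ B₁ + A₁ ⊗ₖ B₀ - A₁ ⊗ₖ B₁ = chsh a₀ a₁ b₀ b₁ := by
    simp only [a₀, a₁, b₀, b₁, chsh, ← mul_kronecker_mul, mul_one, one_mul]
  have hC : (A₀ * A₁ - A₁ * A₀) ⊗ₖ (B₁ * B₀ - B₀ * B₁)
      = (a₀ * a₁ - a₁ * a₀) * (b₁ * b₀ - b₀ * b₁) := by
    simp only [a₀, a₁, b₀, b₁, ← mul_kronecker_mul, mul_one, one_mul, ← sub_kronecker,
      ← kronecker_sub]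
  have hsa₀ := IsSelfAdjoint.kronecker hA₀ (.one (Matrix m m ℂ))
  have hsa₁ := IsSelfAdjoint.kronecker hA₁ (.one (Matrix m m ℂ))
  have hsb₀ := IsSelfAdjoint.kronecker (.one (Matrix n n ℂ)) hB₀
  have hsb₁ := IsSelfAdjoint.kronecker (.one (Matrix n n ℂ)) hB₁
  have ha₀ : a₀ * a₀ = 1 := kronecker_mul_kronecker_self_eq_one hA₀sq (mul_one 1)
  have ha₁ : a₁ * a₁ = 1 := kronecker_mul_kronecker_self_eq_one hA₁sq (mul_one 1)
  have hb₀ : b₀ * b₀ = 1 := kronecker_mul_kronecker_self_eq_one (mul_one 1) hB₀sq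
  have hb₁ : b₁ * b₁ = 1 := kronecker_mul_kronecker_self_eq_one (mul_one 1) hB₁sq
  have hc := commute_kronecker_one_one_kronecker (l := n) (n := m) (α := ℂ)
  rw [hS, hC, ofNat_smul_eq_nsmul, nsmul_one, Nat.cast_ofNat]
  exact ⟨chsh_mul_self ha₀ ha₁ hb₀ hb₁ (hc _ _) (hc _ _) (hc _ _) (hc _ _),
    norm_chsh_le hsa₀ hsa₁ hsb₀ hsb₁ ha₀ ha₁ hb₀ hb₁ (hc _ _) (hc _ _) (hc _ _) (hc _ _)⟩
end

section
/- Decohering the control: if the two-SWITCH control system is in the classical mixture ½|00⟩⟨00| + ½|11⟩⟨11| instead of the entangled state, then for any unitaries U_A, U_B the final (post-control-measurement) joint target state is a mixture of product states ½ P[U_B U_A|0⟩ ⊗ U_B U_A|0⟩] + ½ P[U_A U_B|0⟩ ⊗ U_A U_B|0⟩], which is separable and hence satisfies CHSH ≤ 2. -/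
/-! The switch is block-diagonal in the control basis, so conjugating `ρ_C ⊗ σ` by it and
discarding the controls leaves `∑_c ρ_C(c, c) • G_c σ G_cᴴ`. For the decohered control only the
branches `c = (0, 0)` and `c = (1, 1)` survive, and each maps `|00⟩` to a product pure state.
On a product state the CHSH value factorises as `a₀ b₀ + a₀ b₁ + a₁ b₀ - a₁ b₁` with real
expectations `|aᵢ|, |bⱼ| ≤ 1`, which is at most `2`; a mixture inherits the bound. -/

open Matrix Complex Kronecker ComplexOrder

noncomputable section

/-- The computational basis state `|0⟩`. -/
def e0 : Fin 2 → ℂ := ![1, 0]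

/-- Projector onto a vector `v` : `P[v] i j = v i * conj (v j)`. -/
def projVec {α : Type*} (v : α → ℂ) : Matrix α α ℂ :=
  Matrix.of fun i j => v i * star (v j)

/-- The gate sequence applied by a SWITCH given the control value:
control `0` applies `U_B U_A`, control `1` applies `U_A U_B`. -/
def gateOf (UA UB : Matrix (Fin 2) (Fin 2) ℂ) : Fin 2 → Matrix (Fin 2) (Fin 2) ℂ :=
  ![UB * UA, UA * UB]

/-- The classically mixed control state `½|00⟩⟨00| + ½|11⟩⟨11|` of the two control qubits. -/
def ρC : Matrix (Fin 2 × Fin 2) (Fin 2 × Fin 2) ℂ :=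
  (1/2 : ℂ) • projVec (fun c : Fin 2 × Fin 2 => if c = (0, 0) then 1 else 0)
    + (1/2 : ℂ) • projVec (fun c : Fin 2 × Fin 2 => if c = (1, 1) then 1 else 0)

/-- The two-SWITCH operation on controls ⊗ targets: controlled on the (computational-basis)
control values, it applies the corresponding gate orders to the two targets. -/
def switchOp (UA UB : Matrix (Fin 2) (Fin 2) ℂ) :
    Matrix ((Fin 2 × Fin 2) × (Fin 2 × Fin 2)) ((Fin 2 × Fin 2) × (Fin 2 × Fin 2)) ℂ :=
  Matrix.of fun p q =>
    (if p.1 = q.1 then 1 else 0) *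
      (gateOf UA UB p.1.1 ⊗ₖ gateOf UA UB p.1.2) p.2 q.2

/-- The final target state: apply the SWITCH to `ρ_C ⊗ |00⟩⟨00|_T` and trace out
(measure and discard) the controls. -/
def finalTarget (UA UB : Matrix (Fin 2) (Fin 2) ℂ) : Matrix (Fin 2 × Fin 2) (Fin 2 × Fin 2) ℂ :=
  Matrix.of fun t t' => ∑ c : Fin 2 × Fin 2,
    (switchOp UA UB * (ρC ⊗ₖ projVec (fun p : Fin 2 × Fin 2 => e0 p.1 * e0 p.2))
        * (switchOp UA UB)ᴴ) (c, t) (c, t')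

lemma kronecker_mulVec_prod {R α β α' β' : Type*} [CommSemiring R] [Fintype α] [Fintype β]
    (A : Matrix α' α R) (B : Matrix β' β R) (x : α → R) (y : β → R) :
    (A ⊗ₖ B) *ᵥ (fun p : α × β => x p.1 * y p.2) = fun p => (A *ᵥ x) p.1 * (B *ᵥ y) p.2 := by
  ext ⟨i, j⟩
  simp only [mulVec, dotProduct, kroneckerMap_apply, Fintype.sum_prod_type, Finset.sum_mul_sum]
  exact Finset.sum_congr rfl fun _ _ => Finset.sum_congr rfl fun _ _ => by ring

section

variable {α β : Type*}

lemma projVec_prod (x : α → ℂ) (y : β → ℂ) :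
    projVec (fun p : α × β => x p.1 * y p.2) = projVec x ⊗ₖ projVec y := by
  ext ⟨i, j⟩ ⟨k, l⟩
  simp only [projVec, of_apply, kroneckerMap_apply, star_mul']
  ring

lemma trace_projVec_mul [Fintype α] (x : α → ℂ) (A : Matrix α α ℂ) :
    (projVec x * A).trace = star x ⬝ᵥ A *ᵥ x := by
  simp only [trace, diag, mul_apply, projVec, of_apply, dotProduct, mulVec, Pi.star_apply,
    Finset.mul_sum]
  rw [Finset.sum_comm]
  exact Finset.sum_congr rfl fun _ _ => Finset.sum_congr rfl fun _ _ => by ring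

lemma mul_projVec_mul_conjTranspose [Fintype α] (M : Matrix β α ℂ) (x : α → ℂ) :
    M * projVec x * Mᴴ = projVec (M *ᵥ x) := by
  ext i j
  simp only [mul_apply, projVec, of_apply, conjTranspose_apply, mulVec, dotProduct, star_sum,
    star_mul', Finset.sum_mul, Finset.mul_sum]
  exact Finset.sum_congr rfl fun _ _ => Finset.sum_congr rfl fun _ _ => by ring

end

def controlled {κ τ : Type*} [DecidableEq κ] (G : κ → Matrix τ τ ℂ) :
    Matrix (κ × τ) (κ × τ) ℂ :=
  Matrix.of fun p q => (if p.1 = q.1 then 1 else 0) * G p.1 p.2 q.2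

lemma controlled_mul_kronecker_mul_conjTranspose_apply {κ τ : Type*} [Fintype κ]
    [DecidableEq κ] [Fintype τ] (G : κ → Matrix τ τ ℂ) (ρ : Matrix κ κ ℂ) (σ : Matrix τ τ ℂ)
    (c : κ) (t t' : τ) :
    (controlled G * (ρ ⊗ₖ σ) * (controlled G)ᴴ) (c, t) (c, t')
      = ρ c c * (G c * σ * (G c)ᴴ) t t' := by
  simp only [controlled, mul_apply, of_apply, conjTranspose_apply, kroneckerMap_apply,
    Fintype.sum_prod_type, ite_mul, one_mul, zero_mul, Finset.sum_ite_irrel, Finset.sum_const_zero,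
    Finset.sum_ite_eq, Finset.mem_univ, if_true, RCLike.star_def, apply_ite (starRingEnd ℂ),
    map_zero, mul_ite, mul_zero, Finset.sum_mul, Finset.mul_sum]
  exact Finset.sum_congr rfl fun _ _ => Finset.sum_congr rfl fun _ _ => by ring

lemma switchOp_eq_controlled (UA UB : Matrix (Fin 2) (Fin 2) ℂ) :
    switchOp UA UB = controlled fun c => gateOf UA UB c.1 ⊗ₖ gateOf UA UB c.2 := rfl

lemma finalTarget_eq_sum (UA UB : Matrix (Fin 2) (Fin 2) ℂ) :
    finalTarget UA UB = ∑ c : Fin 2 × Fin 2, ρC c c •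
      projVec (fun p : Fin 2 × Fin 2 =>
        (gateOf UA UB c.1 *ᵥ e0) p.1 * (gateOf UA UB c.2 *ᵥ e0) p.2) := by
  ext t t'
  simp only [finalTarget, switchOp_eq_controlled,
    controlled_mul_kronecker_mul_conjTranspose_apply, mul_projVec_mul_conjTranspose,
    kronecker_mulVec_prod, of_apply, Matrix.sum_apply, Matrix.smul_apply, smul_eq_mul]

lemma ρC_diag :
    ρC (0, 0) (0, 0) = 1/2 ∧ ρC (0, 1) (0, 1) = 0 ∧ ρC (1, 0) (1, 0) = 0 ∧
      ρC (1, 1) (1, 1) = 1/2 := by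
  simp [ρC, projVec]

lemma finalTarget_eq (UA UB : Matrix (Fin 2) (Fin 2) ℂ) :
    finalTarget UA UB
      = (1/2 : ℂ) • projVec (fun p : Fin 2 × Fin 2 =>
            (UB * UA).mulVec e0 p.1 * (UB * UA).mulVec e0 p.2)
        + (1/2 : ℂ) • projVec (fun p : Fin 2 × Fin 2 =>
            (UA * UB).mulVec e0 p.1 * (UA * UB).mulVec e0 p.2) := by
  obtain ⟨h00, h01, h10, h11⟩ := ρC_diag
  rw [finalTarget_eq_sum, Fintype.sum_prod_type, Fin.sum_univ_two, Fin.sum_univ_two,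
    Fin.sum_univ_two, h00, h01, h10, h11, zero_smul, zero_smul, add_zero, zero_add]
  rfl

lemma abs_chsh_le_two_s19 {a₀ a₁ b₀ b₁ : ℝ} (ha₀ : |a₀| ≤ 1) (ha₁ : |a₁| ≤ 1) (hb₀ : |b₀| ≤ 1)
    (hb₁ : |b₁| ≤ 1) : |a₀ * b₀ + a₀ * b₁ + a₁ * b₀ - a₁ * b₁| ≤ 2 := by
  calc |a₀ * b₀ + a₀ * b₁ + a₁ * b₀ - a₁ * b₁| = |a₀ * (b₀ + b₁) + a₁ * (b₀ - b₁)| := by ring_nf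
    _ ≤ |a₀| * |b₀ + b₁| + |a₁| * |b₀ - b₁| := by
      rw [← abs_mul, ← abs_mul]; exact abs_add_le _ _
    _ ≤ |b₀ + b₁| + |b₀ - b₁| := by
      gcongr <;> exact mul_le_of_le_one_left (abs_nonneg _) ‹_›
    _ ≤ 2 := by
      rw [abs_le] at hb₀ hb₁
      cases abs_cases (b₀ + b₁) <;> cases abs_cases (b₀ - b₁) <;> linarith

lemma Matrix.IsHermitian.abs_re_dotProduct_mulVec_le_one {n : Type*} [Fintype n]
    [DecidableEq n] {A : Matrix n n ℂ} (hA : A.IsHermitian) (hA2 : A * A = 1) {u : n → ℂ}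
    (hu : star u ⬝ᵥ u = 1) : |(star u ⬝ᵥ A *ᵥ u).re| ≤ 1 := by
  -- `1 ± A` is twice a projection, hence positive semidefinite.
  have psd {B : Matrix n n ℂ} (hB : B.IsHermitian) (hBB : B * B = (2 : ℂ) • B) :
      0 ≤ (star u ⬝ᵥ B *ᵥ u).re := by
    have h := (posSemidef_conjTranspose_mul_self B).dotProduct_mulVec_nonneg u
    rw [hB.eq, hBB, smul_mulVec, dotProduct_smul, smul_eq_mul] at h
    have h' := (Complex.nonneg_iff.mp h).1
    simp only [Complex.mul_re, Complex.re_ofNat, Complex.im_ofNat, zero_mul, sub_zero] at h'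
    linarith
  have hp := psd (isHermitian_one.add hA) (by
    simp only [add_mul, mul_add, one_mul, mul_one, hA2, two_smul]; abel)
  have hm := psd (isHermitian_one.sub hA) (by
    simp only [sub_mul, mul_sub, one_mul, mul_one, hA2, two_smul]; abel)
  rw [add_mulVec, one_mulVec, dotProduct_add, Complex.add_re] at hp
  rw [sub_mulVec, one_mulVec, dotProduct_sub, Complex.sub_re] at hm
  rw [hu, Complex.one_re] at hp hm
  exact abs_le.mpr ⟨by linarith, by linarith⟩

def chshOp {α β : Type*} (A₀ A₁ : Matrix α α ℂ) (B₀ B₁ : Matrix β β ℂ) :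
    Matrix (α × β) (α × β) ℂ :=
  A₀ ⊗ₖ B₀ + A₀ ⊗ₖ B₁ + A₁ ⊗ₖ B₀ - A₁ ⊗ₖ B₁

section ProductState

variable {α β : Type*} [Fintype α] [Fintype β]

lemma trace_projVec_prod_mul_kronecker (x : α → ℂ) (y : β → ℂ) (A : Matrix α α ℂ)
    (B : Matrix β β ℂ) :
    (projVec (fun p : α × β => x p.1 * y p.2) * (A ⊗ₖ B)).trace
      = (projVec x * A).trace * (projVec y * B).trace := by
  rw [projVec_prod, ← mul_kronecker_mul, trace_kronecker]

lemma re_trace_projVec_prod_mul_chshOp (x : α → ℂ) (y : β → ℂ) {A₀ A₁ : Matrix α α ℂ}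
    {B₀ B₁ : Matrix β β ℂ} (hA₀ : A₀.IsHermitian) (hA₁ : A₁.IsHermitian)
    (hB₀ : B₀.IsHermitian) (hB₁ : B₁.IsHermitian) :
    ((projVec (fun p : α × β => x p.1 * y p.2) * chshOp A₀ A₁ B₀ B₁).trace).re
      = (star x ⬝ᵥ A₀ *ᵥ x).re * (star y ⬝ᵥ B₀ *ᵥ y).re
        + (star x ⬝ᵥ A₀ *ᵥ x).re * (star y ⬝ᵥ B₁ *ᵥ y).re
        + (star x ⬝ᵥ A₁ *ᵥ x).re * (star y ⬝ᵥ B₀ *ᵥ y).re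
        - (star x ⬝ᵥ A₁ *ᵥ x).re * (star y ⬝ᵥ B₁ *ᵥ y).re := by
  have ha₀ : (star x ⬝ᵥ A₀ *ᵥ x).im = 0 := hA₀.im_star_dotProduct_mulVec_self x
  have ha₁ : (star x ⬝ᵥ A₁ *ᵥ x).im = 0 := hA₁.im_star_dotProduct_mulVec_self x
  have hb₀ : (star y ⬝ᵥ B₀ *ᵥ y).im = 0 := hB₀.im_star_dotProduct_mulVec_self y
  have hb₁ : (star y ⬝ᵥ B₁ *ᵥ y).im = 0 := hB₁.im_star_dotProduct_mulVec_self y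
  simp only [chshOp, mul_add, mul_sub, trace_add, trace_sub, trace_projVec_prod_mul_kronecker]
  simp only [trace_projVec_mul, Complex.add_re, Complex.sub_re, Complex.mul_re, ha₀, ha₁, hb₀,
    hb₁, mul_zero, sub_zero]

end ProductState

lemma abs_re_trace_projVec_prod_mul_chshOp_le_two {α β : Type*} [Fintype α] [DecidableEq α]
    [Fintype β] [DecidableEq β] {x : α → ℂ} {y : β → ℂ} (hx : star x ⬝ᵥ x = 1)
    (hy : star y ⬝ᵥ y = 1) {A₀ A₁ : Matrix α α ℂ} {B₀ B₁ : Matrix β β ℂ}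
    (hA₀ : A₀.IsHermitian) (hA₁ : A₁.IsHermitian) (hB₀ : B₀.IsHermitian)
    (hB₁ : B₁.IsHermitian) (sA₀ : A₀ * A₀ = 1) (sA₁ : A₁ * A₁ = 1) (sB₀ : B₀ * B₀ = 1)
    (sB₁ : B₁ * B₁ = 1) :
    |((projVec (fun p : α × β => x p.1 * y p.2) * chshOp A₀ A₁ B₀ B₁).trace).re| ≤ 2 := by
  rw [re_trace_projVec_prod_mul_chshOp x y hA₀ hA₁ hB₀ hB₁]
  exact abs_chsh_le_two_s19 (hA₀.abs_re_dotProduct_mulVec_le_one sA₀ hx)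
    (hA₁.abs_re_dotProduct_mulVec_le_one sA₁ hx) (hB₀.abs_re_dotProduct_mulVec_le_one sB₀ hy)
    (hB₁.abs_re_dotProduct_mulVec_le_one sB₁ hy)

lemma abs_re_trace_half_add_half_mul_le {ι : Type*} [Fintype ι] {ρ₁ ρ₂ C : Matrix ι ι ℂ}
    {r : ℝ} (h₁ : |((ρ₁ * C).trace).re| ≤ r) (h₂ : |((ρ₂ * C).trace).re| ≤ r) :
    |((((1/2 : ℂ) • ρ₁ + (1/2 : ℂ) • ρ₂) * C).trace).re| ≤ r := by
  have h : ((((1/2 : ℂ) • ρ₁ + (1/2 : ℂ) • ρ₂) * C).trace).re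
      = ((ρ₁ * C).trace).re / 2 + ((ρ₂ * C).trace).re / 2 := by
    simp only [add_mul, smul_mul, trace_add, trace_smul, smul_eq_mul, Complex.add_re,
      Complex.mul_re]
    norm_num
    ring
  rw [h, abs_le] at *
  constructor <;> linarith

lemma star_mulVec_dotProduct_mulVec_of_mem_unitaryGroup {n : Type*} [Fintype n] [DecidableEq n]
    {U : Matrix n n ℂ} (hU : U ∈ unitaryGroup n ℂ) (v : n → ℂ) :
    star (U *ᵥ v) ⬝ᵥ U *ᵥ v = star v ⬝ᵥ v := by
  rw [star_mulVec, ← dotProduct_mulVec, mulVec_mulVec, ← star_eq_conjTranspose,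
    mem_unitaryGroup_iff'.mp hU, one_mulVec]

lemma star_e0_dotProduct_e0 : star e0 ⬝ᵥ e0 = 1 := by
  simp [e0, dotProduct, Fin.sum_univ_two]

/-- Decohering the control: with the controls in the classical mixture `½|00⟩⟨00| + ½|11⟩⟨11|`,
the final joint target state is the separable mixture of product states
`½ P[U_B U_A|0⟩ ⊗ U_B U_A|0⟩] + ½ P[U_A U_B|0⟩ ⊗ U_A U_B|0⟩]`, which satisfies `CHSH ≤ 2`. -/
theorem decohered_control_gives_separable_target
    (UA UB : Matrix (Fin 2) (Fin 2) ℂ)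
    (hUA : UA ∈ Matrix.unitaryGroup (Fin 2) ℂ) (hUB : UB ∈ Matrix.unitaryGroup (Fin 2) ℂ) :
    finalTarget UA UB
      = (1/2 : ℂ) • projVec (fun p : Fin 2 × Fin 2 =>
            (UB * UA).mulVec e0 p.1 * (UB * UA).mulVec e0 p.2)
        + (1/2 : ℂ) • projVec (fun p : Fin 2 × Fin 2 =>
            (UA * UB).mulVec e0 p.1 * (UA * UB).mulVec e0 p.2) ∧
    ∀ A₀ A₁ B₀ B₁ : Matrix (Fin 2) (Fin 2) ℂ,
      A₀.IsHermitian → A₁.IsHermitian → B₀.IsHermitian → B₁.IsHermitian →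
      A₀ * A₀ = 1 → A₁ * A₁ = 1 → B₀ * B₀ = 1 → B₁ * B₁ = 1 →
      |((finalTarget UA UB * (A₀ ⊗ₖ B₀ + A₀ ⊗ₖ B₁ + A₁ ⊗ₖ B₀ - A₁ ⊗ₖ B₁)).trace).re| ≤ 2 := by
  refine ⟨finalTarget_eq UA UB, fun A₀ A₁ B₀ B₁ hA₀ hA₁ hB₀ hB₁ sA₀ sA₁ sB₀ sB₁ => ?_⟩
  have unit {U : Matrix (Fin 2) (Fin 2) ℂ} (hU : U ∈ unitaryGroup (Fin 2) ℂ) :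
      star (U *ᵥ e0) ⬝ᵥ U *ᵥ e0 = 1 := by
    rw [star_mulVec_dotProduct_mulVec_of_mem_unitaryGroup hU, star_e0_dotProduct_e0]
  have chsh {U : Matrix (Fin 2) (Fin 2) ℂ} (hU : U ∈ unitaryGroup (Fin 2) ℂ) :=
    abs_re_trace_projVec_prod_mul_chshOp_le_two (unit hU) (unit hU) hA₀ hA₁ hB₀ hB₁
      sA₀ sA₁ sB₀ sB₁
  rw [finalTarget_eq UA UB]
  exact abs_re_trace_half_add_half_mul_le (chsh (mul_mem hUB hUA)) (chsh (mul_mem hUA hUB))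
end
end
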